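/- Moving a connected component of a block to a neighboring block (as in the contiguity repair step) strictly decreases n_con(P) by at least 1, provided the component is adjacent to the target block and the target block induces a connected subgraph containing a neighbor of the component. -/
import Mathlib

open SimpleGraph

private lemma card_cc_one {W : Type*} (H : SimpleGraph W) (h : H.Connected) :
    Nat.card H.ConnectedComponent = 1 := by
  haveI : Subsingleton H.ConnectedComponent := h.preconnected.subsingleton_connectedComponent
  haveI : Nonempty W := h.nonempty
  haveI : Nonempty H.ConnectedComponent := ⟨H.connectedComponentMk (Classical.arbitrary W)⟩
  exact Nat.card_eq_one_iff_unique.mpr ⟨inferInstance, inferInstance⟩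

private lemma union_connected {V : Type*} (G : SimpleGraph V) (A B : Set V)
    (hA : (G.induce A).Connected) (hB : (G.induce B).Connected)
    (u : V) (hu : u ∈ B) (v : V) (hv : v ∈ A) (huv : G.Adj u v) :
    (G.induce (A ∪ B)).Connected := by
  have hAle : A ⊆ A ∪ B := Set.subset_union_left
  have hBle : B ⊆ A ∪ B := Set.subset_union_right
  have key : ∀ x : ↥(A ∪ B), (G.induce (A ∪ B)).Reachable x ⟨v, hAle hv⟩ := by
    rintro ⟨x, hx | hx⟩
    · have := hA.preconnected ⟨x, hx⟩ ⟨v, hv⟩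
      exact this.map (G.induceHomOfLE hAle).toHom
    · have h1 : (G.induce (A ∪ B)).Reachable ⟨x, hBle hx⟩ ⟨u, hBle hu⟩ :=
        (hB.preconnected ⟨x, hx⟩ ⟨u, hu⟩).map (G.induceHomOfLE hBle).toHom
      exact h1.trans (SimpleGraph.Adj.reachable (by exact huv))
  rw [SimpleGraph.connected_iff]
  exact ⟨fun x y => (key x).trans (key y).symm, ⟨⟨v, hAle hv⟩⟩⟩

private lemma card_split {V : Type*} [Finite V] (G : SimpleGraph V) (S C : Set V)
    (hCS : C ⊆ S) (hC : C.Nonempty) (hconn : (G.induce C).Connected)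
    (hsep : ∀ u ∈ C, ∀ v ∈ S \ C, ¬ G.Adj u v) :
    Nat.card (G.induce (S \ C)).ConnectedComponent + 1
      = Nat.card (G.induce S).ConnectedComponent := by
  classical
  obtain ⟨c0, hc0⟩ := hC
  have hdS : S \ C ⊆ S := Set.diff_subset
  let ι : G.induce (S \ C) →g G.induce S := (G.induceHomOfLE hdS).toHom
  -- a walk in S starting outside C stays outside C
  have stay : ∀ {a b : ↥S} (_ : (G.induce S).Walk a b) (ha : (a : V) ∉ C),
      ∃ hb : (b : V) ∉ C,
        (G.induce (S \ C)).Reachable ⟨a, ⟨a.2, ha⟩⟩ ⟨b, ⟨b.2, hb⟩⟩ := by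
    intro a b p
    induction p with
    | nil => intro ha; exact ⟨ha, by rfl⟩
    | @cons x y z h p ih =>
      intro hx
      have hy : (y : V) ∉ C := by
        intro hyC
        exact hsep y hyC x ⟨x.2, hx⟩ (SimpleGraph.Adj.symm h)
      obtain ⟨hz, hr⟩ := ih hy
      refine ⟨hz, ?_⟩
      have hadj : (G.induce (S \ C)).Adj ⟨x, ⟨x.2, hx⟩⟩ ⟨y, ⟨y.2, hy⟩⟩ := h
      exact hadj.reachable.trans hr
  -- a walk starting in C stays in C
  have inC : ∀ {a b : ↥S} (_ : (G.induce S).Walk a b), (a : V) ∈ C → (b : V) ∈ C := by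
    intro a b p
    induction p with
    | nil => exact id
    | @cons x y z h p ih =>
      intro hx
      have hy : (y : V) ∈ C := by
        by_contra hyC
        exact hsep x hx y ⟨y.2, hyC⟩ h
      exact ih hy
  -- reachability within C transfers to S
  have creach : ∀ (x : V) (hx : x ∈ C),
      (G.induce S).Reachable ⟨c0, hCS hc0⟩ ⟨x, hCS hx⟩ := by
    intro x hx
    exact (hconn.preconnected ⟨c0, hc0⟩ ⟨x, hx⟩).map (G.induceHomOfLE hCS).toHom
  let φ : Option ((G.induce (S \ C)).ConnectedComponent) → (G.induce S).ConnectedComponent :=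
    fun o => o.elim ((G.induce S).connectedComponentMk ⟨c0, hCS hc0⟩)
      (fun c => c.map ι)
  have hφbij : Function.Bijective φ := by
    constructor
    · rintro (_ | c) (_ | d) h
      · rfl
      · exfalso
        induction d using SimpleGraph.ConnectedComponent.ind with
        | _ x =>
          simp only [φ, Option.elim, SimpleGraph.ConnectedComponent.map_mk] at h
          have hr := (SimpleGraph.ConnectedComponent.exact h)
          obtain ⟨p⟩ := hr
          exact x.2.2 (inC p hc0)
      · exfalso
        induction c using SimpleGraph.ConnectedComponent.ind with
        | _ x =>
          simp only [φ, Option.elim, SimpleGraph.ConnectedComponent.map_mk] at h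
          have hr := (SimpleGraph.ConnectedComponent.exact h.symm)
          obtain ⟨p⟩ := hr
          exact x.2.2 (inC p hc0)
      · congr 1
        induction c using SimpleGraph.ConnectedComponent.ind with
        | _ x =>
          induction d using SimpleGraph.ConnectedComponent.ind with
          | _ y =>
            simp only [φ, Option.elim, SimpleGraph.ConnectedComponent.map_mk] at h
            obtain ⟨p⟩ := SimpleGraph.ConnectedComponent.exact h
            obtain ⟨hb, hr⟩ := stay p x.2.2
            exact SimpleGraph.ConnectedComponent.sound hr
    · intro d
      induction d using SimpleGraph.ConnectedComponent.ind with
      | _ x =>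
        by_cases hx : (x : V) ∈ C
        · refine ⟨none, ?_⟩
          simp only [φ, Option.elim]
          exact SimpleGraph.ConnectedComponent.sound (creach x hx)
        · refine ⟨some ((G.induce (S \ C)).connectedComponentMk ⟨x, ⟨x.2, hx⟩⟩), ?_⟩
          simp only [φ, Option.elim, SimpleGraph.ConnectedComponent.map_mk]
          congr 1
  haveI : Finite ((G.induce (S \ C)).ConnectedComponent) := Quot.finite _
  calc Nat.card (G.induce (S \ C)).ConnectedComponent + 1
      = Nat.card (Option ((G.induce (S \ C)).ConnectedComponent)) :=
        (Finite.card_option).symm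
    _ = Nat.card (G.induce S).ConnectedComponent :=
        Nat.card_congr (Equiv.ofBijective φ hφbij)

theorem stmt_17 {V : Type*} [Fintype V] (G : SimpleGraph V) (k : ℕ)
    (T : Fin k → Set V)
    (hdisj : ∀ i j, i ≠ j → Disjoint (T i) (T j))
    (hcover : ⋃ i, T i = Set.univ)
    (i j : Fin k) (hij : i ≠ j)
    (C : Set V) (hCsub : C ⊆ T i) (hCne : C.Nonempty)
    (hCconn : (G.induce C).Connected)
    (hCcomp : ∀ u ∈ C, ∀ v ∈ T i \ C, ¬ G.Adj u v)
    (hadj : ∃ u ∈ C, ∃ v ∈ T j, G.Adj u v)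
    (hjconn : (G.induce (T j)).Connected) :
    (∑ l, Nat.card (G.induce
          (Function.update (Function.update T i (T i \ C)) j (T j ∪ C) l)).ConnectedComponent)
        + 1 ≤
      ∑ l, Nat.card (G.induce (T l)).ConnectedComponent := by
  classical
  obtain ⟨u, hu, v, hv, huv⟩ := hadj
  set T' := Function.update (Function.update T i (T i \ C)) j (T j ∪ C) with hT'
  have hT'i : T' i = T i \ C := by
    rw [hT', Function.update_of_ne hij, Function.update_self]
  have hT'j : T' j = T j ∪ C := by
    rw [hT', Function.update_self]
  have hT'l : ∀ l, l ≠ i → l ≠ j → T' l = T l := by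
    intro l hli hlj
    rw [hT', Function.update_of_ne hlj, Function.update_of_ne hli]
  have hi_eq : Nat.card (G.induce (T' i)).ConnectedComponent + 1
      = Nat.card (G.induce (T i)).ConnectedComponent := by
    rw [hT'i]
    exact card_split G (T i) C hCsub hCne hCconn hCcomp
  have hj_new : Nat.card (G.induce (T' j)).ConnectedComponent = 1 := by
    rw [hT'j]
    exact card_cc_one _ (union_connected G (T j) C hjconn hCconn u hu v hv huv)
  have hj_old : Nat.card (G.induce (T j)).ConnectedComponent = 1 :=
    card_cc_one _ hjconn
  have key : ∀ l, Nat.card (G.induce (T' l)).ConnectedComponent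
      + (if l = i then 1 else 0)
      = Nat.card (G.induce (T l)).ConnectedComponent := by
    intro l
    by_cases hli : l = i
    · subst hli; rw [if_pos rfl]; exact hi_eq
    · by_cases hlj : l = j
      · subst hlj; rw [if_neg hli, add_zero, hj_new, hj_old]
      · rw [if_neg hli, add_zero, hT'l l hli hlj]
  calc (∑ l, Nat.card (G.induce (T' l)).ConnectedComponent) + 1
      = ∑ l, (Nat.card (G.induce (T' l)).ConnectedComponent + (if l = i then 1 else 0)) := by
        rw [Finset.sum_add_distrib, Finset.sum_ite_eq' Finset.univ i (fun _ => 1)]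
        simp
    _ = ∑ l, Nat.card (G.induce (T l)).ConnectedComponent := by
        exact Finset.sum_congr rfl (fun l _ => key l)
    _ ≤ _ := le_refl _
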